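/- arXiv:1508.06458 — 5 statements merged into one kernel-verified Lean document; each statement's English description precedes it below -/
import Mathlib

section
/- For any natural number q ≥ 1, the binomial coefficient C(4q+2, 2q+1) is divisible by 4. -/
theorem four_dvd_choose (q : ℕ) (hq : 1 ≤ q) :
    4 ∣ Nat.choose (4 * q + 2) (2 * q + 1) := by
  have h1 : Nat.choose (4 * q + 2) (2 * q + 1) = Nat.centralBinom (2 * q + 1) := by
    rw [Nat.centralBinom_eq_two_mul_choose]; ring_nf
  rw [h1]
  obtain ⟨m, hm⟩ := Nat.two_dvd_centralBinom_of_one_le (n := 2 * q) (by omega)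
  have h2 := Nat.succ_mul_centralBinom_succ (2 * q)
  rw [hm] at h2
  have h4 : 4 ∣ (2 * q + 1) * Nat.centralBinom (2 * q + 1) := ⟨(2 * (2 * q) + 1) * m, by rw [h2]; ring⟩
  have hodd : Odd (2 * q + 1) := ⟨q, by ring⟩
  have hcop : Nat.Coprime 4 (2 * q + 1) := by
    have : Nat.Coprime 2 (2 * q + 1) := Nat.coprime_two_left.mpr hodd
    have := Nat.Coprime.pow_left 2 this
    simpa using this
  exact (Nat.Coprime.dvd_of_dvd_mul_left hcop h4)
end

section
/- For every natural number q ≥ 1 and every odd integer k, the sum S(k) = ∑_{i=1}^{2q+1} 2i · C(4q+2, 2i) · k^(2i-1) is divisible by 4. -/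
/-!
Since `2i · C(4q+2, 2i) = (4q+2) · C(4q+1, 2i-1)`, the sum is `(4q+2) · T` with
`T = ∑_{j odd} C(4q+1, j) k^j`. Now `2T = (1+k)^(4q+1) - (1-k)^(4q+1)`, and for odd `k` both
`1 + k` and `1 - k` are even, so `2^(4q+1) ∣ 2T`; hence `T` is even and `4 ∣ (4q+2) · T`.
-/

open Finset

theorem mul_choose_succ_eq_succ_mul_choose_pred {n j : ℕ} (hj : 1 ≤ j) :
    j * (n + 1).choose j = (n + 1) * n.choose (j - 1) := by
  obtain ⟨i, rfl⟩ := Nat.exists_eq_add_of_le' hj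
  rw [Nat.add_one_mul_choose_eq, mul_comm, Nat.add_sub_cancel]

theorem sum_Icc_two_mul_sub_one {M : Type*} [AddCommMonoid M] (f : ℕ → M) (m : ℕ) :
    ∑ i ∈ Icc 1 m, f (2 * i - 1) = ∑ j ∈ range (2 * m) with Odd j, f j := by
  induction m with
  | zero => simp
  | succ m ih =>
    rw [sum_Icc_succ_top (by omega), ih, mul_add_one, range_add_one, range_add_one, filter_insert,
      filter_insert]
    simp [show ¬ Odd (2 * m) by simp, add_comm]

theorem one_add_pow_sub_one_sub_pow {R : Type*} [CommRing R] (x : R) (n : ℕ) :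
    (1 + x) ^ n - (1 - x) ^ n = 2 * ∑ j ∈ range (n + 1) with Odd j, (n.choose j : R) * x ^ j := by
  rw [sum_filter, mul_sum, sub_eq_add_neg (1 : R) x, add_comm 1 x, add_comm 1 (-x), add_pow,
    add_pow, ← sum_sub_distrib]
  refine sum_congr rfl fun j _ => ?_
  rcases j.even_or_odd with hj | hj
  · rw [neg_pow, hj.neg_one_pow, if_neg (Nat.not_odd_iff_even.mpr hj)]; ring
  · rw [neg_pow, hj.neg_one_pow, if_pos hj]; ring

theorem two_dvd_sum_odd_choose_mul_pow {k : ℤ} (hk : Odd k) {n : ℕ} (hn : 2 ≤ n) :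
    2 ∣ ∑ j ∈ range (n + 1) with Odd j, (n.choose j : ℤ) * k ^ j := by
  have h2n : 2 ^ n ∣ (1 + k) ^ n - (1 - k) ^ n :=
    dvd_sub (pow_dvd_pow_of_dvd (odd_one.add_odd hk).two_dvd n)
      (pow_dvd_pow_of_dvd (odd_one.sub_odd hk).two_dvd n)
  rw [one_add_pow_sub_one_sub_pow] at h2n
  have : (2 : ℤ) * 2 ∣ 2 * _ := (pow_dvd_pow 2 hn).trans h2n
  exact (mul_dvd_mul_iff_left two_ne_zero).mp this

theorem four_dvd_sum (q : ℕ) (hq : 1 ≤ q) (k : ℤ) (hk : Odd k) :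
    (4 : ℤ) ∣ ∑ i ∈ Finset.Icc 1 (2 * q + 1),
      2 * (i : ℤ) * (Nat.choose (4 * q + 2) (2 * i) : ℤ) * k ^ (2 * i - 1) := by
  have hterm : ∀ i ∈ Icc 1 (2 * q + 1),
      2 * (i : ℤ) * ((4 * q + 2).choose (2 * i) : ℤ) * k ^ (2 * i - 1)
        = (4 * q + 2) * (((4 * q + 1).choose (2 * i - 1) : ℤ) * k ^ (2 * i - 1)) := by
    intro i hi
    have h : ((2 * i * (4 * q + 1 + 1).choose (2 * i) : ℕ) : ℤ)
        = ((4 * q + 1 + 1) * (4 * q + 1).choose (2 * i - 1) : ℕ) :=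
      congrArg _ (mul_choose_succ_eq_succ_mul_choose_pred (by simp at hi; omega))
    push_cast at h
    linear_combination k ^ (2 * i - 1) * h
  rw [sum_congr rfl hterm, ← mul_sum,
    sum_Icc_two_mul_sub_one fun j => ((4 * q + 1).choose j : ℤ) * k ^ j,
    show 2 * (2 * q + 1) = 4 * q + 1 + 1 by ring]
  obtain ⟨t, ht⟩ := two_dvd_sum_odd_choose_mul_pow hk (show 2 ≤ 4 * q + 1 by omega)
  exact ⟨(2 * q + 1) * t, by rw [ht]; ring⟩
end

section
/- For every natural number q ≥ 1 and every integer k, the quantity h_k = -2 · ∑_{i=1}^{2q+1} 2i · C(4q+2, 2i) · k^(2i-1) is divisible by 8. -/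
/-!
Absorption `2i·C(2n+2, 2i) = (2n+2)·C(2n+1, 2i-1)` turns the sum into `(4q+2)·S` with
`S = ∑ C(4q+1, 2j+1) k^(2j+1)`, so `h_k = -4(2q+1)·S`. Modulo 2 every odd power of `k` is `k`,
hence `S ≡ k·∑ C(4q+1, 2j+1) = k·4^(2q)`, which is even as soon as `q ≥ 1`.
-/

open Finset

theorem Finset.sum_range_two_mul {M : Type*} [AddCommMonoid M] (f : ℕ → M) (n : ℕ) :
    ∑ i ∈ range (2 * n), f i = ∑ j ∈ range n, (f (2 * j) + f (2 * j + 1)) := by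
  induction n with
  | zero => simp
  | succ n ih => rw [mul_add_one, sum_range_succ, sum_range_succ, sum_range_succ, ih, add_assoc]

theorem Nat.sum_range_choose_odd (n : ℕ) :
    ∑ j ∈ range (n + 1), (2 * n + 1).choose (2 * j + 1) = 4 ^ n := by
  simp only [Nat.choose_succ_succ']
  rw [← sum_range_two_mul, mul_add_one, sum_range_succ, Nat.sum_range_choose,
    Nat.choose_succ_self, add_zero, pow_mul]
  norm_num

theorem two_dvd_sum_choose_odd_mul_pow {n : ℕ} (hn : n ≠ 0) (k : ℤ) :
    2 ∣ ∑ j ∈ range (n + 1), ((2 * n + 1).choose (2 * j + 1) : ℤ) * k ^ (2 * j + 1) := by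
  have hpow : ∀ j : ℕ, 2 ∣ k ^ (2 * j + 1) - k := fun j => by
    rw [← even_iff_two_dvd, Int.even_sub, Int.even_pow]
    simp
  have hsplit : ∑ j ∈ range (n + 1), ((2 * n + 1).choose (2 * j + 1) : ℤ) * k ^ (2 * j + 1)
      = k * 4 ^ n +
        ∑ j ∈ range (n + 1), ((2 * n + 1).choose (2 * j + 1) : ℤ) * (k ^ (2 * j + 1) - k) := by
    have hodd : ∑ j ∈ range (n + 1), ((2 * n + 1).choose (2 * j + 1) : ℤ) = 4 ^ n := by
      exact_mod_cast Nat.sum_range_choose_odd n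
    rw [← hodd, mul_sum, ← sum_add_distrib]
    exact sum_congr rfl fun j _ => by ring
  rw [hsplit]
  exact dvd_add (dvd_mul_of_dvd_right (dvd_pow (by norm_num) hn) k)
    (dvd_sum fun j _ => dvd_mul_of_dvd_right (hpow j) _)

theorem sum_Icc_two_mul_choose_mul_pow (n : ℕ) (k : ℤ) :
    ∑ i ∈ Icc 1 (n + 1), 2 * (i : ℤ) * ((2 * n + 2).choose (2 * i) : ℤ) * k ^ (2 * i - 1)
      = (2 * n + 2) *
        ∑ j ∈ range (n + 1), ((2 * n + 1).choose (2 * j + 1) : ℤ) * k ^ (2 * j + 1) := by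
  rw [← Ico_add_one_right_eq_Icc, sum_Ico_eq_sum_range, add_tsub_cancel_right, mul_sum]
  refine sum_congr rfl fun j _ => ?_
  have habsorb : ((2 * n + 2 : ℕ) : ℤ) * ((2 * n + 1).choose (2 * j + 1) : ℤ)
      = ((2 * n + 2).choose (2 * j + 2) : ℤ) * ((2 * j + 2 : ℕ) : ℤ) := by
    exact_mod_cast Nat.add_one_mul_choose_eq (2 * n + 1) (2 * j + 1)
  rw [show 2 * (1 + j) = 2 * j + 2 by ring, show 2 * j + 2 - 1 = 2 * j + 1 by omega]
  push_cast at habsorb ⊢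
  linear_combination -k ^ (2 * j + 1) * habsorb

theorem eight_dvd_hk (q : ℕ) (hq : 1 ≤ q) (k : ℤ) :
    (8 : ℤ) ∣ -2 * ∑ i ∈ Finset.Icc 1 (2 * q + 1),
      2 * (i : ℤ) * (Nat.choose (4 * q + 2) (2 * i) : ℤ) * k ^ (2 * i - 1) := by
  obtain ⟨s, hs⟩ := two_dvd_sum_choose_odd_mul_pow (n := 2 * q) (by omega) k
  rw [show 4 * q + 2 = 2 * (2 * q) + 2 by ring, sum_Icc_two_mul_choose_mul_pow, hs]
  exact ⟨-(2 * q + 1) * s, by push_cast; ring⟩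
end

section
/- Let N be a nonzero integer with N ≢ 0 (mod 4) or N a power of 2. If m ≥ 4 and 2^{v₂(m)} · (m-1)! divides 2N, then we reach a contradiction; that is, for m ≥ 4, 2^{v₂(m)} · (m-1)! does not divide 2N under these hypotheses. -/
/-!
Multiplying `2 ^ v₂(m) * (m - 1)!` by the odd part of `m` gives `m!`, so the former carries the
full power of `2` dividing `m!`, which is at least `8 = 2 ^ v₂(4!)` once `m ≥ 4`. Hence `8 ∣ 2N`,
i.e. `4 ∣ N`. If instead `N` is a power of two, the odd factor `3` of `(m - 1)!` cannot divide `2N`.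
-/

open Nat

lemma pow_dvd_pow_padicValNat_mul_factorial_pred {p m k : ℕ} [Fact p.Prime] (hm : m ≠ 0)
    (h : p ^ k ∣ m !) : p ^ k ∣ p ^ padicValNat p m * (m - 1)! := by
  have hk : k ≤ padicValNat p (m !) := (padicValNat_dvd_iff_le (factorial_ne_zero m)).mp h
  have hsplit : padicValNat p (m !) = padicValNat p m + padicValNat p (m - 1)! := by
    rw [← mul_factorial_pred hm, padicValNat.mul hm (factorial_ne_zero _)]
  calc p ^ k ∣ p ^ padicValNat p (m !) := pow_dvd_pow p hk
    _ = p ^ padicValNat p m * p ^ padicValNat p (m - 1)! := by rw [hsplit, pow_add]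
    _ ∣ p ^ padicValNat p m * (m - 1)! := mul_dvd_mul_left _ pow_padicValNat_dvd

lemma eight_dvd_two_pow_padicValNat_mul_factorial_pred {m : ℕ} (hm : 4 ≤ m) :
    8 ∣ 2 ^ padicValNat 2 m * (m - 1)! :=
  pow_dvd_pow_padicValNat_mul_factorial_pred (k := 3) (by omega)
    ((by decide : 2 ^ 3 ∣ 4 !).trans (factorial_dvd_factorial hm))

lemma three_dvd_factorial_pred {m : ℕ} (hm : 4 ≤ m) : 3 ∣ (m - 1)! :=
  dvd_factorial (by norm_num) (by omega)

lemma three_not_dvd_two_pow (k : ℕ) : ¬ 3 ∣ 2 ^ k := by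
  intro h
  have := Nat.prime_three.dvd_of_dvd_pow h
  omega

theorem cor_nonexistence_general (N : ℤ)
    (h : ¬ (4 ∣ N) ∨ ∃ k : ℕ, N = 2 ^ k) (m : ℕ) (hm : 4 ≤ m) :
    ¬ ((2 : ℤ) ^ (padicValNat 2 m) * ((Nat.factorial (m - 1)) : ℤ) ∣ 2 * N) := by
  intro hdvd
  rcases h with h4 | ⟨k, rfl⟩
  · have h8 : (8 : ℤ) ∣ 2 * N :=
      (Int.natCast_dvd_natCast.mpr (eight_dvd_two_pow_padicValNat_mul_factorial_pred hm)).trans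
        (by exact_mod_cast hdvd)
    omega
  · have hdvd' : 2 ^ padicValNat 2 m * (m - 1)! ∣ 2 ^ (k + 1) := by
      rw [pow_succ']
      exact_mod_cast hdvd
    exact three_not_dvd_two_pow (k + 1)
      (((three_dvd_factorial_pred hm).mul_left _).trans hdvd')

theorem cor_nonexistence (N : ℤ) (hN : N ≠ 0)
    (h : ¬ (4 ∣ N) ∨ ∃ k : ℕ, N = 2 ^ k) (m : ℕ) (hm : 4 ≤ m) :
    ¬ ((2 : ℤ) ^ (padicValNat 2 m) * ((Nat.factorial (m - 1)) : ℤ) ∣ 2 * N) :=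
  cor_nonexistence_general N h m hm
end

section
/- For every natural number m ≥ 1, the total Chern class relation c(g^m ⊗ (β - n)) in H*(S^{2m} ∧ M) reduces, using y_m² = 0, to the combinatorial identity: ∏_k (1 + (m-1)!·y·((1+s_k)^{-m} - 1)) = 1 + (m-1)!·y·∑_{i≥1} (-1)^i · C(m+i-1, i) · p_i, in the truncated polynomial ring where y² = 0, where p_i = ∑_k s_k^i. -/
theorem Finset.prod_one_add_mul_of_sq_eq_zero {ι A : Type*} [CommRing A] {y : A} (hy : y ^ 2 = 0)
    (t : Finset ι) (f : ι → A) :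
    ∏ k ∈ t, (1 + y * f k) = 1 + y * ∑ k ∈ t, f k := by
  induction t using Finset.cons_induction with
  | empty => simp
  | cons a t ha ih =>
    rw [prod_cons, sum_cons, ih]
    linear_combination (f a * ∑ k ∈ t, f k) * hy

theorem chern_class_identity_general (A : Type*) [CommRing A] (m N D : ℕ)
    (y : A) (hy : y ^ 2 = 0) (s : Fin N → A) :
    ∏ k : Fin N, (1 + (Nat.factorial (m - 1) : A) * y *
        (∑ i ∈ Finset.Icc 1 D, (-1 : A) ^ i * (Nat.choose (m + i - 1) i : A) * s k ^ i)) =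
      1 + (Nat.factorial (m - 1) : A) * y *
        ∑ i ∈ Finset.Icc 1 D, (-1 : A) ^ i * (Nat.choose (m + i - 1) i : A) *
          (∑ k : Fin N, s k ^ i) := by
  have hcy : ((Nat.factorial (m - 1) : A) * y) ^ 2 = 0 := by rw [mul_pow, hy, mul_zero]
  rw [Finset.prod_one_add_mul_of_sq_eq_zero hcy, Finset.sum_comm]
  simp only [Finset.mul_sum]

/-- Equation (1) of the paper: in a commutative ring where `y ^ 2 = 0`, with
`(1 + s k)⁻ᵐ - 1` expanded as the (truncated) series
`∑_{i=1}^{D} (-1)^i C(m+i-1, i) (s k)^i`, the product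
`∏_k (1 + (m-1)! y ((1+s k)⁻ᵐ - 1))` equals
`1 + (m-1)! y ∑_{i≥1} (-1)^i C(m+i-1, i) p_i` where `p_i = ∑_k (s k)^i`. -/
theorem chern_class_identity (A : Type*) [CommRing A] (m N D : ℕ) (hm : 1 ≤ m)
    (y : A) (hy : y ^ 2 = 0) (s : Fin N → A) :
    ∏ k : Fin N, (1 + (Nat.factorial (m - 1) : A) * y *
        (∑ i ∈ Finset.Icc 1 D, (-1 : A) ^ i * (Nat.choose (m + i - 1) i : A) * s k ^ i)) =
      1 + (Nat.factorial (m - 1) : A) * y *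
        ∑ i ∈ Finset.Icc 1 D, (-1 : A) ^ i * (Nat.choose (m + i - 1) i : A) *
          (∑ k : Fin N, s k ^ i) :=
  chern_class_identity_general A m N D y hy s
end
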